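/- arXiv:1912.09349 — 2 statements merged into one kernel-verified Lean document; each statement's English description precedes it below -/
import Mathlib

section
/- Let a ∈ ℝ and b ∈ ℝ ∪ {+∞} with a < b, let m : [a,b) → ℝ be strictly increasing, continuous from the right at a, differentiable on (a,b) with derivative bounded on every closed subinterval [a',b'] ⊂ (a,b), and satisfying m(x) → +∞ as x → b⁻. Let f : [a,b) → [0,∞) be Riemann integrable on compact subintervals with sup_{[a,b)} f < +∞ and f(x) → 0 as x → b⁻. Then for all a ≤ r < R with R ∈ (a,b), one has A_m(r,R;f) ≤ A_m(a,R; m^→[f]). -/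
open MeasureTheory Set Filter

/-- The integral average `A_m(r,R;f) = (1/(m R - m r)) ∫_r^R f dm`, where the
Riemann–Stieltjes integral `∫_r^R f dm` is expressed as `∫_r^R f(x) m'(x) dx`
(valid since `m` is differentiable with locally bounded derivative). -/
noncomputable def intAvg (m f : ℝ → ℝ) (r R : ℝ) : ℝ :=
  (m R - m r)⁻¹ * ∫ x in r..R, f x * deriv m x

/-- The right maximization `m^→[f](r) = sup_{x ∈ [r,b)} f x`, for `b ∈ ℝ ∪ {+∞}`. -/
noncomputable def rightMax (b : EReal) (f : ℝ → ℝ) (r : ℝ) : ℝ :=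
  sSup (f '' {x : ℝ | r ≤ x ∧ (x : EReal) < b})

/-- The filter of real numbers tending to `b ∈ ℝ ∪ {+∞}` from the left. -/
noncomputable def toBFilter (b : EReal) : Filter ℝ :=
  Filter.comap (Real.toEReal) (nhdsWithin b (Set.Iio b))

/-!
The right maximization `F = m^→[f]` dominates `f` and is nonincreasing, so
`A_m(r,R;f) ≤ A_m(r,R;F) ≤ F(r) ≤ A_m(a,r;F)`. As `A_m(a,R;F)` is a convex combination of
`A_m(a,r;F)` and `A_m(r,R;F)`, it is at least `A_m(r,R;F)`.
-/

open intervalIntegral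

section rightMax

variable {b : EReal} {f : ℝ → ℝ} {a : ℝ}

lemma BddAbove.image_rightRange (hf : BddAbove (f '' {x | a ≤ x ∧ (x : EReal) < b})) {x : ℝ}
    (hax : a ≤ x) : BddAbove (f '' {y | x ≤ y ∧ (y : EReal) < b}) :=
  hf.mono (image_mono fun y hy => show a ≤ y ∧ _ from ⟨hax.trans hy.1, hy.2⟩)

lemma le_rightMax (hf : BddAbove (f '' {x | a ≤ x ∧ (x : EReal) < b})) {x : ℝ} (hax : a ≤ x)
    (hxb : (x : EReal) < b) : f x ≤ rightMax b f x :=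
  le_csSup (hf.image_rightRange hax) ⟨x, ⟨le_rfl, hxb⟩, rfl⟩

lemma rightMax_antitoneOn (hf : BddAbove (f '' {x | a ≤ x ∧ (x : EReal) < b})) :
    AntitoneOn (rightMax b f) {x | a ≤ x ∧ (x : EReal) < b} :=
  fun _ hx y hy hxy =>
    csSup_le_csSup (hf.image_rightRange hx.1) ⟨f y, y, ⟨le_rfl, hy.2⟩, rfl⟩
      (image_mono fun _ hz => ⟨hxy.trans hz.1, hz.2⟩)

end rightMax

section Monotone

variable {m : ℝ → ℝ} {a b : ℝ}

lemma MonotoneOn.deriv_nonneg_of_mem_Ioo (hm : MonotoneOn m (Icc a b)) {x : ℝ}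
    (hx : x ∈ Ioo a b) : 0 ≤ deriv m x := by
  rw [← derivWithin_of_mem_nhds (Icc_mem_nhds hx.1 hx.2)]
  exact hm.derivWithin_nonneg

lemma MonotoneOn.intervalIntegrable_deriv_of_le (hm : MonotoneOn m (Icc a b)) (hab : a ≤ b) :
    IntervalIntegrable (deriv m) volume a b :=
  (hm.mono (uIcc_of_le hab).subset).intervalIntegrable_deriv

lemma MonotoneOn.integral_deriv_eq_sub (hm : MonotoneOn m (Icc a b)) (hab : a ≤ b)
    (hmc : ContinuousOn m (Icc a b)) (hmd : ∀ x ∈ Ioo a b, DifferentiableAt ℝ m x) :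
    ∫ x in a..b, deriv m x = m b - m a :=
  integral_eq_sub_of_hasDerivAt_of_le hab hmc (fun x hx => (hmd x hx).hasDerivAt)
    (hm.intervalIntegrable_deriv_of_le hab)

end Monotone

section Antitone

variable {F w : ℝ → ℝ} {a r b : ℝ}

lemma AntitoneOn.intervalIntegrable_mul (hF : AntitoneOn F (Icc a b)) (hab : a ≤ b)
    (hw : IntervalIntegrable w volume a b) :
    IntervalIntegrable (fun x => F x * w x) volume a b := by
  rw [intervalIntegrable_iff_integrableOn_Icc_of_le hab] at hw ⊢
  refine hw.bdd_mul (c := max |F b| |F a|)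
    (aemeasurable_restrict_of_antitoneOn measurableSet_Icc hF).aestronglyMeasurable
    (ae_restrict_of_forall_mem measurableSet_Icc fun x hx => ?_)
  exact abs_le_max_abs_abs (hF hx (right_mem_Icc.2 hab) hx.2)
    (hF (left_mem_Icc.2 hab) hx hx.1)

/-- An antitone function has a smaller `w`-weighted mean on a final segment `[r, b]` than on
the whole interval `[a, b]` (in cross-multiplied form). -/
lemma AntitoneOn.integral_mul_mul_integral_le (hF : AntitoneOn F (Icc a b)) (har : a ≤ r)
    (hrb : r ≤ b) (hw : IntervalIntegrable w volume a b) (hw0 : ∀ x ∈ Ioo a b, 0 ≤ w x) :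
    (∫ x in r..b, F x * w x) * ∫ x in a..b, w x ≤
      (∫ x in a..b, F x * w x) * ∫ x in r..b, w x := by
  have hab := har.trans hrb
  have hFw := hF.intervalIntegrable_mul hab hw
  have hw₁ : IntervalIntegrable w volume a r := hw.mono_set (uIcc_subset_uIcc_left (by simp [*]))
  have hw₂ : IntervalIntegrable w volume r b := hw.mono_set (uIcc_subset_uIcc_right (by simp [*]))
  have hFw₁ : IntervalIntegrable (fun x => F x * w x) volume a r :=
    hFw.mono_set (uIcc_subset_uIcc_left (by simp [*]))
  have hFw₂ : IntervalIntegrable (fun x => F x * w x) volume r b :=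
    hFw.mono_set (uIcc_subset_uIcc_right (by simp [*]))
  have hrmem : r ∈ Icc a b := ⟨har, hrb⟩
  have hW : ∀ c d, a ≤ c → c ≤ d → d ≤ b → 0 ≤ ∫ x in c..d, w x :=
    fun c d hac hcd hdb => integral_nonneg_of_ae_restrict hcd <| by
      rw [EventuallyLE, ← restrict_Ioo_eq_restrict_Icc]
      exact ae_restrict_of_forall_mem measurableSet_Ioo fun x hx =>
        hw0 x ⟨hac.trans_lt hx.1, hx.2.trans_le hdb⟩
  have hI₁ : F r * ∫ x in a..r, w x ≤ ∫ x in a..r, F x * w x := by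
    rw [← intervalIntegral.integral_const_mul]
    refine integral_mono_on_of_le_Ioo har (hw₁.const_mul _) hFw₁ fun x hx => ?_
    exact mul_le_mul_of_nonneg_right (hF ⟨hx.1.le, hx.2.le.trans hrb⟩ hrmem hx.2.le)
      (hw0 x ⟨hx.1, hx.2.trans_le hrb⟩)
  have hI₂ : ∫ x in r..b, F x * w x ≤ F r * ∫ x in r..b, w x := by
    rw [← intervalIntegral.integral_const_mul]
    refine integral_mono_on_of_le_Ioo hrb hFw₂ (hw₂.const_mul _) fun x hx => ?_
    exact mul_le_mul_of_nonneg_right (hF hrmem ⟨har.trans hx.1.le, hx.2.le⟩ hx.1.le)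
      (hw0 x ⟨har.trans_lt hx.1, hx.2⟩)
  rw [← integral_add_adjacent_intervals hw₁ hw₂,
    ← integral_add_adjacent_intervals hFw₁ hFw₂]
  nlinarith [mul_le_mul_of_nonneg_right hI₁ (hW r b har hrb le_rfl),
    mul_le_mul_of_nonneg_right hI₂ (hW a r le_rfl har hrb)]

end Antitone

section intAvg

variable {m f g : ℝ → ℝ} {a r R : ℝ}

lemma intAvg_mono (hrR : r ≤ R) (hm : MonotoneOn m (Icc r R))
    (hf : AEStronglyMeasurable f (volume.restrict (Ioo r R)))
    (hg : IntervalIntegrable (fun x => g x * deriv m x) volume r R)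
    (hfg : ∀ x ∈ Ioo r R, 0 ≤ f x ∧ f x ≤ g x) : intAvg m f r R ≤ intAvg m g r R := by
  have hfg' : ∀ x ∈ Ioo r R, f x * deriv m x ≤ g x * deriv m x := fun x hx =>
    mul_le_mul_of_nonneg_right (hfg x hx).2 (hm.deriv_nonneg_of_mem_Ioo hx)
  have hfm : IntervalIntegrable (fun x => f x * deriv m x) volume r R := by
    rw [intervalIntegrable_iff_integrableOn_Ioo_of_le hrR] at hg ⊢
    refine hg.mono' (hf.mul (measurable_deriv m).aestronglyMeasurable)
      (ae_restrict_of_forall_mem measurableSet_Ioo fun x hx => ?_)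
    rw [Real.norm_eq_abs, abs_of_nonneg
      (mul_nonneg (hfg x hx).1 (hm.deriv_nonneg_of_mem_Ioo hx))]
    exact hfg' x hx
  exact mul_le_mul_of_nonneg_left (integral_mono_on_of_le_Ioo hrR hfm hg hfg')
    (inv_nonneg.2 (sub_nonneg.2 (hm (left_mem_Icc.2 hrR) (right_mem_Icc.2 hrR) hrR)))

lemma AntitoneOn.intAvg_le_intAvg (hF : AntitoneOn f (Icc a R)) (har : a ≤ r) (hrR : r < R)
    (hm : StrictMonoOn m (Icc a R)) (hmc : ContinuousOn m (Icc a R))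
    (hmd : ∀ x ∈ Ioo a R, DifferentiableAt ℝ m x) : intAvg m f r R ≤ intAvg m f a R := by
  have haR := har.trans_lt hrR
  have hrmem : r ∈ Icc a R := ⟨har, hrR.le⟩
  have hsub : Icc r R ⊆ Icc a R := Icc_subset_Icc_left har
  have hpos₁ : 0 < m R - m r := sub_pos.2 (hm hrmem (right_mem_Icc.2 haR.le) hrR)
  have hpos₂ : 0 < m R - m a :=
    sub_pos.2 (hm (left_mem_Icc.2 haR.le) (right_mem_Icc.2 haR.le) haR)
  have hFTC₁ := (hm.monotoneOn.mono hsub).integral_deriv_eq_sub hrR.le (hmc.mono hsub)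
    fun x hx => hmd x ⟨har.trans_lt hx.1, hx.2⟩
  have hFTC₂ := hm.monotoneOn.integral_deriv_eq_sub haR.le hmc hmd
  rw [intAvg, intAvg, inv_mul_eq_div, inv_mul_eq_div, div_le_div_iff₀ hpos₁ hpos₂,
    ← hFTC₁, ← hFTC₂]
  exact hF.integral_mul_mul_integral_le har hrR.le
    (hm.monotoneOn.intervalIntegrable_deriv_of_le haR.le)
    fun _ => hm.monotoneOn.deriv_nonneg_of_mem_Ioo

end intAvg

theorem stmt_6_general (a : ℝ) (b : EReal) (m f : ℝ → ℝ)
    (hm_mono : StrictMonoOn m {x : ℝ | a ≤ x ∧ (x : EReal) < b})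
    (hm_rc : ContinuousWithinAt m (Set.Ici a) a)
    (hm_diff : ∀ x : ℝ, a < x → (x : EReal) < b → DifferentiableAt ℝ m x)
    (hf_nonneg : ∀ x : ℝ, a ≤ x → (x : EReal) < b → 0 ≤ f x)
    (hf_int : ∀ c d : ℝ, a ≤ c → c ≤ d → (d : EReal) < b →
      IntervalIntegrable f MeasureTheory.volume c d)
    (hf_bdd : ∃ C : ℝ, ∀ x : ℝ, a ≤ x → (x : EReal) < b → f x ≤ C) :
    ∀ r R : ℝ, a ≤ r → r < R → (R : EReal) < b →
      intAvg m f r R ≤ intAvg m (rightMax b f) a R := by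
  intro r R har hrR hRb
  have hIcc : Icc a R ⊆ {x : ℝ | a ≤ x ∧ (x : EReal) < b} :=
    fun x hx => ⟨hx.1, (EReal.coe_le_coe_iff.2 hx.2).trans_lt hRb⟩
  have hbdd : BddAbove (f '' {x | a ≤ x ∧ (x : EReal) < b}) := by
    obtain ⟨C, hC⟩ := hf_bdd
    exact ⟨C, by rintro _ ⟨x, hx, rfl⟩; exact hC x hx.1 hx.2⟩
  have hmc : ContinuousOn m (Icc a R) := by
    intro x hx
    rcases hx.1.eq_or_lt with rfl | hax
    · exact hm_rc.mono Icc_subset_Ici_self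
    · exact (hm_diff x hax (hIcc hx).2).continuousAt.continuousWithinAt
  have hm : StrictMonoOn m (Icc a R) := hm_mono.mono hIcc
  have hF : AntitoneOn (rightMax b f) (Icc a R) := (rightMax_antitoneOn hbdd).mono hIcc
  have hsub : Icc r R ⊆ Icc a R := Icc_subset_Icc_left har
  calc intAvg m f r R ≤ intAvg m (rightMax b f) r R := by
        refine intAvg_mono hrR.le (hm.monotoneOn.mono hsub)
          ((hf_int r R har hrR.le hRb).1.mono_set Ioo_subset_Ioc_self).aestronglyMeasurable
          ((hF.mono hsub).intervalIntegrable_mul hrR.le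
            ((hm.monotoneOn.mono hsub).intervalIntegrable_deriv_of_le hrR.le))
          fun x hx => ?_
        have hx' := hIcc (hsub (Ioo_subset_Icc_self hx))
        exact ⟨hf_nonneg x hx'.1 hx'.2, le_rightMax hbdd hx'.1 hx'.2⟩
    _ ≤ intAvg m (rightMax b f) a R :=
        hF.intAvg_le_intAvg har hrR hm hmc fun x hx =>
          hm_diff x hx.1 (hIcc (Ioo_subset_Icc_self hx)).2

theorem stmt_6 (a : ℝ) (b : EReal) (hab : (a : EReal) < b) (m f : ℝ → ℝ)
    (hm_mono : StrictMonoOn m {x : ℝ | a ≤ x ∧ (x : EReal) < b})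
    (hm_rc : ContinuousWithinAt m (Set.Ici a) a)
    (hm_diff : ∀ x : ℝ, a < x → (x : EReal) < b → DifferentiableAt ℝ m x)
    (hm_bdd : ∀ a' b' : ℝ, a < a' → a' ≤ b' → (b' : EReal) < b →
      ∃ C : ℝ, ∀ x ∈ Set.Icc a' b', |deriv m x| ≤ C)
    (hm_top : Filter.Tendsto m (toBFilter b) Filter.atTop)
    (hf_nonneg : ∀ x : ℝ, a ≤ x → (x : EReal) < b → 0 ≤ f x)
    (hf_int : ∀ c d : ℝ, a ≤ c → c ≤ d → (d : EReal) < b →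
      IntervalIntegrable f MeasureTheory.volume c d)
    (hf_bdd : ∃ C : ℝ, ∀ x : ℝ, a ≤ x → (x : EReal) < b → f x ≤ C)
    (hf_zero : Filter.Tendsto f (toBFilter b) (nhds 0)) :
    ∀ r R : ℝ, a ≤ r → r < R → (R : EReal) < b →
      intAvg m f r R ≤ intAvg m (rightMax b f) a R :=
  stmt_6_general a b m f hm_mono hm_rc hm_diff hf_nonneg hf_int hf_bdd
end

section
/- Let 0 < r₀ ∈ ℝ and let d : [r₀,+∞) → [0,∞) be bounded with d(R) → 0 as R → +∞. Define Q(x) := sup_{t ∈ [r₀,x]} ( t · sup_{s ∈ [t,+∞)} d(s) ) for x ∈ [r₀,+∞). Then Q is increasing, Q(x)/x → 0 as x → +∞, and d(R) ≤ (1/ln(R/r)) ∫_r^R (Q(x)/x²) dx for all r₀ ≤ r < R < +∞. -/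
/-!
Write `m t = sup_{s ≥ t} d s`, so that `Q` is the running supremum of `t ↦ t · m t`. Since
`d R ≤ m x` for `x ≤ R`, we get `x · d R ≤ Q x` on `[r, R]`, and integrating `d R / x ≤ Q x / x²`
gives the inequality, because `∫_r^R dx / x = log (R / r)`. As `m t → 0`, the running supremum
beyond a threshold `T` is at most `max (Q T) (ε x)`, whence `Q x / x → 0`.
Finiteness of `Q` comes from `0 ≤ m t ≤ m r₀`, the lower bound because `d → 0`.
-/

open MeasureTheory Set Filter

noncomputable section

def tailSup (d : ℝ → ℝ) (t : ℝ) : ℝ := sSup (d '' Ici t)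

def runningSup (f : ℝ → ℝ) (r₀ x : ℝ) : ℝ := sSup (f '' Icc r₀ x)

end

section TailSup

variable {d : ℝ → ℝ} {a t s : ℝ}

theorem le_tailSup (hbdd : BddAbove (d '' Ici t)) (hs : t ≤ s) : d s ≤ tailSup d t :=
  le_csSup hbdd (mem_image_of_mem d hs)

theorem tailSup_le_tailSup (hbdd : BddAbove (d '' Ici t)) (hts : t ≤ s) :
    tailSup d s ≤ tailSup d t :=
  csSup_le_csSup hbdd (image_nonempty.2 nonempty_Ici) (image_mono (Ici_subset_Ici.2 hts))

theorem tailSup_le_of_forall_le {c : ℝ} (h : ∀ s, t ≤ s → d s ≤ c) : tailSup d t ≤ c :=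
  csSup_le (image_nonempty.2 nonempty_Ici) (forall_mem_image.2 h)

theorem le_tailSup_of_tendsto (hd : Tendsto d atTop (nhds a)) (hbdd : BddAbove (d '' Ici t)) :
    a ≤ tailSup d t :=
  le_of_tendsto hd (eventually_atTop.2 ⟨t, fun _ hs => le_tailSup hbdd hs⟩)

theorem tendsto_tailSup (hd : Tendsto d atTop (nhds a)) : Tendsto (tailSup d) atTop (nhds a) := by
  refine tendsto_order.2 ⟨fun b hb => ?_, fun b hb => ?_⟩
  · obtain ⟨T, hT⟩ := eventually_atTop.1 (hd.eventually_le_const (lt_add_one a))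
    filter_upwards [eventually_ge_atTop T] with t ht
    have hbdd : BddAbove (d '' Ici t) :=
      ⟨a + 1, forall_mem_image.2 fun s hs => hT s (ht.trans hs)⟩
    exact hb.trans_le (le_tailSup_of_tendsto hd hbdd)
  · obtain ⟨c, hac, hcb⟩ := exists_between hb
    obtain ⟨T, hT⟩ := eventually_atTop.1 (hd.eventually_le_const hac)
    filter_upwards [eventually_ge_atTop T] with t ht
    exact (tailSup_le_of_forall_le fun s hs => hT s (ht.trans hs)).trans_lt hcb

end TailSup

section RunningSup

variable {f : ℝ → ℝ} {r₀ t x : ℝ}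

theorem le_runningSup (hf : BddAbove (f '' Icc r₀ x)) (ht : t ∈ Icc r₀ x) :
    f t ≤ runningSup f r₀ x :=
  le_csSup hf (mem_image_of_mem f ht)

theorem monotoneOn_runningSup (hf : ∀ x, BddAbove (f '' Icc r₀ x)) :
    MonotoneOn (runningSup f r₀) (Ici r₀) := fun _ hx _ _ hxy =>
  csSup_le_csSup (hf _) (image_nonempty.2 (nonempty_Icc.2 hx))
    (image_mono (Icc_subset_Icc_right hxy))

theorem runningSup_le_max {T c : ℝ} (hf : BddAbove (f '' Icc r₀ T)) (hT : r₀ ≤ T) (hx : T ≤ x)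
    (hc : ∀ t ∈ Icc T x, f t ≤ c) : runningSup f r₀ x ≤ max (runningSup f r₀ T) c := by
  refine csSup_le (image_nonempty.2 (nonempty_Icc.2 (hT.trans hx))) (forall_mem_image.2 ?_)
  intro t ⟨hrt, htx⟩
  rcases le_total t T with htT | hTt
  · exact (le_runningSup hf ⟨hrt, htT⟩).trans (le_max_left _ _)
  · exact (hc t ⟨hTt, htx⟩).trans (le_max_right _ _)

theorem tendsto_runningSup_div (hf : ∀ x, BddAbove (f '' Icc r₀ x))
    (hlim : Tendsto (fun t => f t / t) atTop (nhds 0)) :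
    Tendsto (fun x => runningSup f r₀ x / x) atTop (nhds 0) := by
  refine tendsto_order.2 ⟨fun b hb => ?_, fun b hb => ?_⟩
  · filter_upwards [hlim.eventually_const_lt hb, eventually_ge_atTop r₀,
      eventually_gt_atTop 0] with x hfx hrx hx
    exact hfx.trans_le (div_le_div_of_nonneg_right (le_runningSup (hf x) ⟨hrx, le_rfl⟩) hx.le)
  · obtain ⟨T, hT⟩ := eventually_atTop.1 ((hlim.eventually_lt_const (half_pos hb)).and
      ((eventually_ge_atTop r₀).and (eventually_gt_atTop 0)))
    have hsmall : Tendsto (fun x => runningSup f r₀ T / x) atTop (nhds 0) :=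
      tendsto_const_nhds.div_atTop tendsto_id
    filter_upwards [hsmall.eventually_lt_const hb, eventually_ge_atTop T]
      with x hQT hTx
    obtain ⟨-, hrT, hT0⟩ := hT T le_rfl
    have hx : 0 < x := hT0.trans_le hTx
    have hbound : runningSup f r₀ x ≤ max (runningSup f r₀ T) (b / 2 * x) := by
      refine runningSup_le_max (hf T) hrT hTx fun t ⟨hTt, htx⟩ => ?_
      obtain ⟨hft, -, ht0⟩ := hT t hTt
      calc f t ≤ b / 2 * t := ((div_lt_iff₀ ht0).1 hft).le
        _ ≤ b / 2 * x := by gcongr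
    rw [div_lt_iff₀ hx] at hQT ⊢
    exact hbound.trans_lt (max_lt hQT (by nlinarith))

end RunningSup

theorem le_inv_log_mul_integral_div_sq {g : ℝ → ℝ} {c r R : ℝ} (hr : 0 < r) (hrR : r < R)
    (hg : IntervalIntegrable g volume r R) (hcg : ∀ x ∈ Icc r R, c * x ≤ g x) :
    c ≤ (Real.log (R / r))⁻¹ * ∫ x in r..R, g x / x ^ 2 := by
  have hIcc : uIcc r R = Icc r R := uIcc_of_le hrR.le
  have hzero : (0 : ℝ) ∉ uIcc r R := by rw [hIcc]; exact fun h => hr.not_ge h.1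
  have hne : ∀ x ∈ uIcc r R, x ≠ 0 := fun x hx h => hzero (h ▸ hx)
  have hinv : IntervalIntegrable (fun x => c * x⁻¹) volume r R :=
    (continuousOn_const.mul (continuousOn_id.inv₀ hne)).intervalIntegrable
  have hdiv : IntervalIntegrable (fun x => g x / x ^ 2) volume r R := by
    simpa only [div_eq_mul_inv] using
      hg.mul_continuousOn (g := fun x => (x ^ 2)⁻¹)
        ((continuous_pow 2).continuousOn.inv₀ fun x hx => pow_ne_zero 2 (hne x hx))
  have hpointwise : ∀ x ∈ Icc r R, c * x⁻¹ ≤ g x / x ^ 2 := fun x hx => by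
    have hx0 : 0 < x := hr.trans_le hx.1
    calc c * x⁻¹ = c * x / x ^ 2 := by field_simp
      _ ≤ g x / x ^ 2 := by gcongr; exact hcg x hx
  have hmono := intervalIntegral.integral_mono_on hrR.le hinv hdiv hpointwise
  rw [intervalIntegral.integral_const_mul, integral_inv hzero] at hmono
  rwa [le_inv_mul_iff₀ (Real.log_pos ((one_lt_div hr).2 hrR)), mul_comm]

theorem stmt_14_general (r₀ : ℝ) (hr₀ : 0 < r₀) (d : ℝ → ℝ)
    (hd_bdd : ∃ C : ℝ, ∀ x ∈ Set.Ici r₀, d x ≤ C)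
    (hd_lim : Filter.Tendsto d Filter.atTop (nhds 0))
    -- `Q(x) = sup_{t ∈ [r₀,x]} ( t · sup_{s ∈ [t,∞)} d s )`:
    (Q : ℝ → ℝ)
    (hQ : ∀ x : ℝ, r₀ ≤ x →
      Q x = sSup ((fun t => t * sSup (d '' Set.Ici t)) '' Set.Icc r₀ x)) :
    MonotoneOn Q (Set.Ici r₀) ∧
    Filter.Tendsto (fun x => Q x / x) Filter.atTop (nhds 0) ∧
    (∀ r R : ℝ, r₀ ≤ r → r < R →
      d R ≤ (Real.log (R / r))⁻¹ * ∫ x in r..R, Q x / x ^ 2) := by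
  have hQ_run : EqOn (runningSup (fun t => t * tailSup d t) r₀) Q (Ici r₀) := fun x hx =>
    (hQ x hx).symm
  have hbdd : ∀ t, r₀ ≤ t → BddAbove (d '' Ici t) := fun t ht =>
    (bddAbove_def.2 (hd_bdd.imp fun _ h => forall_mem_image.2 h)).mono
      (image_mono (Ici_subset_Ici.2 ht))
  have hf : ∀ x, BddAbove ((fun t => t * tailSup d t) '' Icc r₀ x) := fun x =>
    ⟨x * tailSup d r₀, forall_mem_image.2 fun t ⟨hrt, htx⟩ =>
      mul_le_mul htx (tailSup_le_tailSup (hbdd r₀ le_rfl) hrt)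
        (le_tailSup_of_tendsto hd_lim (hbdd t hrt)) (hr₀.le.trans (hrt.trans htx))⟩
  have hmono : MonotoneOn Q (Ici r₀) := (monotoneOn_runningSup hf).congr hQ_run
  refine ⟨hmono, ?_, fun r R hr hrR => ?_⟩
  · have hlim : Tendsto (fun t => t * tailSup d t / t) atTop (nhds 0) :=
      (tendsto_tailSup hd_lim).congr' <| (eventually_gt_atTop 0).mono fun t ht =>
        (mul_div_cancel_left₀ _ ht.ne').symm
    exact (tendsto_runningSup_div hf hlim).congr' <|
      (eventually_ge_atTop r₀).mono fun x hx => by rw [hQ_run hx]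
  · refine le_inv_log_mul_integral_div_sq (hr₀.trans_le hr) hrR
      ((hmono.mono fun x hx => hr.trans (uIcc_of_le hrR.le ▸ hx).1).intervalIntegrable)
      fun x ⟨hrx, hxR⟩ => ?_
    have hx : r₀ ≤ x := hr.trans hrx
    calc d R * x = x * d R := mul_comm _ _
      _ ≤ x * tailSup d x := by gcongr; exacts [(hr₀.trans_le hx).le, le_tailSup (hbdd x hx) hxR]
      _ ≤ Q x := hQ_run hx ▸ le_runningSup (hf x) ⟨hx, le_rfl⟩

theorem stmt_14 (r₀ : ℝ) (hr₀ : 0 < r₀) (d : ℝ → ℝ)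
    (hd_nonneg : ∀ x ∈ Set.Ici r₀, 0 ≤ d x)
    (hd_bdd : ∃ C : ℝ, ∀ x ∈ Set.Ici r₀, d x ≤ C)
    (hd_lim : Filter.Tendsto d Filter.atTop (nhds 0))
    -- `Q(x) = sup_{t ∈ [r₀,x]} ( t · sup_{s ∈ [t,∞)} d s )`:
    (Q : ℝ → ℝ)
    (hQ : ∀ x : ℝ, r₀ ≤ x →
      Q x = sSup ((fun t => t * sSup (d '' Set.Ici t)) '' Set.Icc r₀ x)) :
    MonotoneOn Q (Set.Ici r₀) ∧
    Filter.Tendsto (fun x => Q x / x) Filter.atTop (nhds 0) ∧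
    (∀ r R : ℝ, r₀ ≤ r → r < R →
      d R ≤ (Real.log (R / r))⁻¹ * ∫ x in r..R, Q x / x ^ 2) :=
  stmt_14_general r₀ hr₀ d hd_bdd hd_lim Q hQ
end
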